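/- Let k ≥ 2 and let α_1, ..., α_k ∈ ℂ be the distinct roots of Ψ_k(X) = X^k − X^{k−1} − ⋯ − X − 1, with α_1 the unique root of absolute value greater than 1. If m_1, m_2, ..., m_k are integers with m_1 < 0 and m_i > 0 for i = 2, ..., k, then there is no nonzero integer n with (α_1^{m_1} α_2^{m_2} ⋯ α_k^{m_k})^n = 1; in other words, α_1^{m_1} α_2^{m_2} ⋯ α_k^{m_k} is not a root of unity. -/

import Mathlib

/-!
Every root of `Ψ_k` other than `α_1` has absolute value at most `1`, so
`|α_1^{m_1} α_2^{m_2} ⋯ α_k^{m_k}| ≤ |α_1|^{m_1} < 1`, whereas a root of unity has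
absolute value `1`.
-/

theorem zpow_ne_one_of_norm_ne_one {𝕜 : Type*} [NormedDivisionRing 𝕜] {z : 𝕜}
    (hz : ‖z‖ ≠ 1) {n : ℤ} (hn : n ≠ 0) : z ^ n ≠ 1 := fun h =>
  hn <| (zpow_eq_one_iff_right₀ (norm_nonneg z) hz).mp <| by rw [← norm_zpow, h, norm_one]

theorem norm_zpow_le_one {𝕜 : Type*} [NormedDivisionRing 𝕜] {z : 𝕜} (hz : ‖z‖ ≤ 1)
    {m : ℤ} (hm : 0 ≤ m) : ‖z ^ m‖ ≤ 1 := by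
  lift m to ℕ using hm
  rw [zpow_natCast, norm_pow]
  exact pow_le_one₀ (norm_nonneg z) hz

theorem norm_prod_zpow_lt_one {ι 𝕜 : Type*} [Fintype ι] [NormedField 𝕜] (f : ι → 𝕜)
    (m : ι → ℤ) (i₀ : ι) (hbig : 1 < ‖f i₀‖) (hm₀ : m i₀ < 0)
    (hsmall : ∀ i, i ≠ i₀ → ‖f i‖ ≤ 1 ∧ 0 ≤ m i) : ‖∏ i, f i ^ m i‖ < 1 := by
  classical
  rw [← Finset.mul_prod_erase _ _ (Finset.mem_univ i₀), norm_mul, norm_prod, norm_zpow]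
  refine mul_lt_one_of_nonneg_of_lt_one_left (by positivity)
    (zpow_lt_one_of_neg₀ hbig hm₀) (Finset.prod_le_one (fun _ _ => norm_nonneg _) ?_)
  intro i hi
  obtain ⟨hfi, hmi⟩ := hsmall i (Finset.ne_of_mem_erase hi)
  exact norm_zpow_le_one hfi hmi

/-- **No monomial in the roots with negative exponent on `α₁` and positive on the
others is a root of unity.** Let `α_1, …, α_k` be the distinct complex roots of
`Ψ_k(X) = X^k - X^{k-1} - ⋯ - X - 1`, with `α_1` the unique root of absolute value
greater than `1`. If `m_1 < 0` and `m_i > 0` for `i = 2, …, k`, then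
`α_1^{m_1} α_2^{m_2} ⋯ α_k^{m_k}` is not a root of unity: no nonzero integer power
of it equals `1`. -/
theorem monomial_in_roots_not_root_of_unity (k : ℕ) (hk : 2 ≤ k) (α : Fin k → ℂ)
    (hbig : 1 < ‖α ⟨0, by omega⟩‖)
    (huniq : ∀ i : Fin k, 1 < ‖α i‖ → i = ⟨0, by omega⟩)
    (m : Fin k → ℤ) (hm0 : m ⟨0, by omega⟩ < 0)
    (hmpos : ∀ i : Fin k, i ≠ ⟨0, by omega⟩ → 0 < m i) :
    ∀ n : ℤ, n ≠ 0 → (∏ i, (α i) ^ (m i)) ^ n ≠ 1 := by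
  intro n hn
  have hsmall : ∀ i, i ≠ ⟨0, by omega⟩ → ‖α i‖ ≤ 1 ∧ 0 ≤ m i := fun i hi =>
    ⟨le_of_not_gt fun h => hi (huniq i h), (hmpos i hi).le⟩
  exact zpow_ne_one_of_norm_ne_one (norm_prod_zpow_lt_one α m _ hbig hm0 hsmall).ne hn
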